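/- arXiv:1604.06568 — 6 statements merged into one kernel-verified Lean document; each statement's English description precedes it below -/
import Mathlib

section
/- Suppose the neighborhood system on the finite sample space 𝒴 is determined by the undirected graph G = (𝒴, E), and let 𝒴₀ ⊆ 𝒴 be a subset such that ⋃_{y∈𝒴₀} n(y) = 𝒴. Define the graph G₀ = (𝒴₀, E₀) by (y, y') ∈ E₀ if and only if y ≠ y' and n(y) ∩ n(y') ≠ ∅. If G₀ is connected and every local potential φ_y (y ∈ 𝒴₀) is strictly convex on ℝ_{>0}^{b(y)}, then the composite local Bregman divergence D_Φ satisfies the coincidence axiom on 𝒫: for all p, q ∈ 𝒫, D_Φ(p, q) = 0 implies p = q. -/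
open scoped BigOperators

noncomputable def bregman {A : Type*} [Fintype A] [DecidableEq A]
    (φ : (A → ℝ) → ℝ) (f g : A → ℝ) : ℝ :=
  φ f - φ g - ∑ a, fderiv ℝ φ g (Pi.single a 1) * (f a - g a)

def posOrth (A : Type*) : Set (A → ℝ) := {g | ∀ a, 0 < g a}

def probSet (Y : Type*) [Fintype Y] : Set (Y → ℝ) :=
  {p | (∀ y, 0 < p y) ∧ ∑ y, p y = 1}

noncomputable def DPhi {Y : Type*} [Fintype Y] [DecidableEq Y]
    (G : SimpleGraph Y) [DecidableRel G.Adj] (Y0 : Finset Y)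
    (φ : ∀ y : Y, (↥(G.neighborSet y) → ℝ) → ℝ) (f g : Y → ℝ) : ℝ :=
  ∑ y ∈ Y0, f y * bregman (φ y) (fun z => f z.1 / f y) (fun z => g z.1 / g y)

def nbd {Y : Type*} (G : SimpleGraph Y) (y : Y) : Set Y := insert y (G.neighborSet y)

/-- Graph `G₀` on a vertex subset: edges when closed neighborhoods intersect. -/
def overlapGraph {Y : Type*} (G : SimpleGraph Y) (Y0 : Set Y) : SimpleGraph Y0 where
  Adj a b := a ≠ b ∧ (nbd G a.1 ∩ nbd G b.1).Nonempty
  symm := by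
    constructor
    intro a b h
    exact ⟨h.1.symm, by rw [Set.inter_comm]; exact h.2⟩
  loopless := ⟨fun a h => h.1 rfl⟩

/-- Graph `G₀'` on a vertex subset: edges when open neighborhoods intersect. -/
def bOverlapGraph {Y : Type*} (G : SimpleGraph Y) (Y0 : Set Y) : SimpleGraph Y0 where
  Adj a b := a ≠ b ∧ (G.neighborSet a.1 ∩ G.neighborSet b.1).Nonempty
  symm := by
    constructor
    intro a b h
    exact ⟨h.1.symm, by rw [Set.inter_comm]; exact h.2⟩
  loopless := ⟨fun a h => h.1 rfl⟩

noncomputable def psPot (γ : ℝ) {A : Type*} [Fintype A] (f : A → ℝ) : ℝ :=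
  (∑ a, f a ^ (1 + γ)) ^ (1 / (1 + γ))

/-!
Each summand of `D_Φ(p, q)` is `p y` times a Bregman divergence of a convex potential, hence
nonnegative, so `D_Φ(p, q) = 0` forces every local Bregman divergence to vanish. By strict
convexity the local ratio vectors then agree, which says that `p / q` is constant on each closed
neighbourhood `n(y)`, `y ∈ 𝒴₀`. Overlapping neighbourhoods share a vertex, so connectivity of
`G₀` makes `p / q` constant on `⋃ n(y) = 𝒴`, and normalisation forces the constant to be `1`.
-/

theorem isOpen_posOrth (A : Type*) [Finite A] : IsOpen (posOrth A) := by
  have : posOrth A = Set.univ.pi fun _ => Set.Ioi 0 := by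
    ext g
    simp [posOrth]
  rw [this]
  exact isOpen_set_pi Set.finite_univ fun _ _ => isOpen_Ioi

section Gradient

variable {E : Type*} [NormedAddCommGroup E] [NormedSpace ℝ E] {s : Set E} {φ : E → ℝ} {x y : E}

theorem ConvexOn.add_fderiv_sub_le (hc : ConvexOn ℝ s φ) (hx : x ∈ s) (hy : y ∈ s)
    (hd : DifferentiableAt ℝ φ x) : φ x + fderiv ℝ φ x (y - x) ≤ φ y := by
  let L := AffineMap.lineMap (k := ℝ) x y
  have hder : HasDerivAt (φ ∘ L) (fderiv ℝ φ x (y - x)) 0 := by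
    have hφ : HasFDerivAt φ (fderiv ℝ φ x) (L 0) := by simpa [L] using hd.hasFDerivAt
    exact hφ.comp_hasDerivAt 0 AffineMap.hasDerivAt_lineMap
  have hslope := (hc.comp_affineMap L).le_slope_of_hasDerivAt (x := 0) (y := 1)
    (by simpa [L] using hx) (by simpa [L] using hy) zero_lt_one hder
  simp only [slope_def_field, Function.comp_apply, AffineMap.lineMap_apply_one,
    AffineMap.lineMap_apply_zero, sub_zero, div_one, L] at hslope
  linarith

theorem StrictConvexOn.add_fderiv_sub_lt (hc : StrictConvexOn ℝ s φ) (hx : x ∈ s) (hy : y ∈ s)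
    (hxy : x ≠ y) (hd : DifferentiableAt ℝ φ x) : φ x + fderiv ℝ φ x (y - x) < φ y := by
  -- the gradient inequality towards the midpoint, where strict convexity leaves a gap
  let m := (1 / 2 : ℝ) • x + (1 / 2 : ℝ) • y
  have hm : m ∈ s := hc.1 hx hy (by norm_num) (by norm_num) (by norm_num)
  have hgap : φ m < 1 / 2 * φ x + 1 / 2 * φ y :=
    hc.2 hx hy hxy (by norm_num) (by norm_num) (by norm_num)
  have hgrad := hc.convexOn.add_fderiv_sub_le hx hm hd
  have hmx : m - x = (1 / 2 : ℝ) • (y - x) := by module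
  rw [hmx, map_smul, smul_eq_mul] at hgrad
  linarith

end Gradient

section Bregman

variable {A : Type*} [Fintype A] [DecidableEq A] {s : Set (A → ℝ)} {φ : (A → ℝ) → ℝ}
  {f g : A → ℝ}

theorem bregman_eq_sub_fderiv (φ : (A → ℝ) → ℝ) (f g : A → ℝ) :
    bregman φ f g = φ f - φ g - fderiv ℝ φ g (f - g) := by
  conv_rhs => rw [← Finset.univ_sum_single (f - g)]
  simp only [bregman, map_sum, sub_right_inj]
  refine Finset.sum_congr rfl fun a _ => ?_
  rw [mul_comm, ← smul_eq_mul, ← map_smul, ← Pi.single_smul', smul_eq_mul, mul_one, Pi.sub_apply]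

theorem bregman_nonneg (hc : ConvexOn ℝ s φ) (hf : f ∈ s) (hg : g ∈ s)
    (hd : DifferentiableAt ℝ φ g) : 0 ≤ bregman φ f g := by
  have := hc.add_fderiv_sub_le hg hf hd
  rw [bregman_eq_sub_fderiv]
  linarith

theorem eq_of_bregman_eq_zero (hc : StrictConvexOn ℝ s φ) (hf : f ∈ s) (hg : g ∈ s)
    (hd : DifferentiableAt ℝ φ g) (h : bregman φ f g = 0) : f = g := by
  by_contra hfg
  have := hc.add_fderiv_sub_lt hg hf (Ne.symm hfg) hd
  rw [bregman_eq_sub_fderiv] at h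
  linarith

end Bregman

theorem SimpleGraph.Preconnected.eq_of_forall_adj {V β : Type*} {G : SimpleGraph V}
    (hG : G.Preconnected) {r : V → β} (hr : ∀ u v, G.Adj u v → r u = r v) (u v : V) :
    r u = r v := by
  obtain ⟨w⟩ := hG u v
  induction w with
  | nil => rfl
  | cons hadj _ ih => exact (hr _ _ hadj).trans ih

theorem eq_of_forall_mem_nbd {Y β : Type*} {G : SimpleGraph Y} {Y0 : Set Y}
    (hcover : ⋃ y ∈ Y0, nbd G y = Set.univ) (hconn : (overlapGraph G Y0).Preconnected)
    {r : Y → β} (hr : ∀ y ∈ Y0, ∀ w ∈ nbd G y, r w = r y) (u v : Y) : r u = r v := by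
  have hY0 : ∀ a b : Y0, r a = r b :=
    hconn.eq_of_forall_adj fun a b ⟨_, w, hwa, hwb⟩ =>
      (hr a a.2 w hwa).symm.trans (hr b b.2 w hwb)
  have hmem : ∀ w, ∃ y ∈ Y0, w ∈ nbd G y := fun w => by
    have : w ∈ ⋃ y ∈ Y0, nbd G y := hcover ▸ Set.mem_univ w
    simpa using this
  obtain ⟨a, ha, hua⟩ := hmem u
  obtain ⟨b, hb, hvb⟩ := hmem v
  rw [hr a ha u hua, hr b hb v hvb]
  exact hY0 ⟨a, ha⟩ ⟨b, hb⟩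

theorem eq_of_mul_eq_mul_of_sum_eq_one {Y R : Type*} [Fintype Y] [CommSemiring R]
    {p q : Y → R} (hpq : ∀ u v, p u * q v = p v * q u) (hp : ∑ y, p y = 1)
    (hq : ∑ y, q y = 1) : p = q := by
  funext y
  calc p y = ∑ u, p y * q u := by rw [← Finset.mul_sum, hq, mul_one]
    _ = ∑ u, p u * q y := Finset.sum_congr rfl fun u _ => hpq y u
    _ = q y := by rw [← Finset.sum_mul, hp, one_mul]

theorem div_eq_div_of_mem_nbd {Y : Type*} {G : SimpleGraph Y} {p q : Y → ℝ}
    (hp : ∀ y, 0 < p y) (hq : ∀ y, 0 < q y) {y : Y}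
    (hy : (fun z : ↥(G.neighborSet y) => p z.1 / p y) = fun z => q z.1 / q y) {w : Y}
    (hw : w ∈ nbd G y) : p w / q w = p y / q y := by
  rcases hw with rfl | hw
  · rfl
  · have := congrFun hy ⟨w, hw⟩
    rw [div_eq_div_iff (hp y).ne' (hq y).ne'] at this
    rw [div_eq_div_iff (hq w).ne' (hq y).ne']
    linarith

theorem localRatios_eq_of_DPhi_eq_zero {Y : Type*} [Fintype Y] [DecidableEq Y]
    {G : SimpleGraph Y} [DecidableRel G.Adj] {Y0 : Finset Y}
    {φ : ∀ y : Y, (↥(G.neighborSet y) → ℝ) → ℝ} {p q : Y → ℝ}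
    (hdiff : ∀ y ∈ Y0, DifferentiableOn ℝ (φ y) (posOrth ↥(G.neighborSet y)))
    (hconv : ∀ y ∈ Y0, StrictConvexOn ℝ (posOrth ↥(G.neighborSet y)) (φ y))
    (hp : ∀ y, 0 < p y) (hq : ∀ y, 0 < q y) (h : DPhi G Y0 φ p q = 0) :
    ∀ y ∈ Y0, (fun z : ↥(G.neighborSet y) => p z.1 / p y) = fun z => q z.1 / q y := by
  have hpos : ∀ f : Y → ℝ, (∀ y, 0 < f y) → ∀ y,
      (fun z : ↥(G.neighborSet y) => f z.1 / f y) ∈ posOrth ↥(G.neighborSet y) :=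
    fun f hf y z => div_pos (hf z) (hf y)
  have hd : ∀ y ∈ Y0, DifferentiableAt ℝ (φ y) fun z => q z.1 / q y := fun y hy =>
    (hdiff y hy).differentiableAt ((isOpen_posOrth _).mem_nhds (hpos q hq y))
  have hterms := (Finset.sum_eq_zero_iff_of_nonneg fun y hy => mul_nonneg (hp y).le
    (bregman_nonneg (hconv y hy).convexOn (hpos p hp y) (hpos q hq y) (hd y hy))).mp h
  intro y hy
  exact eq_of_bregman_eq_zero (hconv y hy) (hpos p hp y) (hpos q hq y) (hd y hy)
    ((mul_eq_zero.mp (hterms y hy)).resolve_left (hp y).ne')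

/-- If the neighborhoods `n(y), y ∈ 𝒴₀` cover `𝒴`, the overlap graph `G₀`
is connected, and all local potentials are (differentiable and) strictly convex on the
positive orthant, then the composite local Bregman divergence satisfies the coincidence
axiom on the probability simplex. -/
theorem stmt0 {Y : Type*} [Fintype Y] [DecidableEq Y]
    (G : SimpleGraph Y) [DecidableRel G.Adj] (Y0 : Finset Y)
    (φ : ∀ y : Y, (↥(G.neighborSet y) → ℝ) → ℝ)
    (hdiff : ∀ y ∈ Y0, DifferentiableOn ℝ (φ y) (posOrth ↥(G.neighborSet y)))
    (hconv : ∀ y ∈ Y0, StrictConvexOn ℝ (posOrth ↥(G.neighborSet y)) (φ y))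
    (hcover : (⋃ y ∈ Y0, nbd G y) = Set.univ)
    (hconn : (overlapGraph G (Y0 : Set Y)).Connected)
    (p q : Y → ℝ) (hp : p ∈ probSet Y) (hq : q ∈ probSet Y)
    (h : DPhi G Y0 φ p q = 0) : p = q := by
  obtain ⟨hppos, hp1⟩ := hp
  obtain ⟨hqpos, hq1⟩ := hq
  have hlocal := localRatios_eq_of_DPhi_eq_zero hdiff hconv hppos hqpos h
  have hconst : ∀ u v, p u / q u = p v / q v :=
    eq_of_forall_mem_nbd (Y0 := (Y0 : Set Y)) (by simpa using hcover) hconn.preconnected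
      fun y hy _ hw => div_eq_div_of_mem_nbd hppos hqpos (hlocal y hy) hw
  exact eq_of_mul_eq_mul_of_sum_eq_one
    (fun u v => (div_eq_div_iff (hqpos u).ne' (hqpos v).ne').mp (hconst u v)) hp1 hq1
end

section
/- Fix γ > 0 and for each y ∈ 𝒴₀ let φ_y be the local pseudo-spherical potential φ_y(f) = (Σ_{z∈b(y)} f_z^{1+γ})^{1/(1+γ)} on ℝ_{>0}^{b(y)}, and let D_Φ be the associated composite local Bregman divergence. Suppose D_Φ(f, g) = 0 for f, g ∈ ℱ. Then for every y ∈ 𝒴₀ there is a constant λ_y > 0 with f_z/g_z = λ_y for all z ∈ b(y); consequently, if b(y) ∩ b(y') ≠ ∅ for some y, y' ∈ 𝒴₀, then all the ratios f_z/g_z are equal for z ∈ b(y) ∪ b(y'). -/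
open scoped BigOperators

/-!
Write `N` for the `(1 + γ)`-norm `psPot γ`. Its gradient at `g` is `(g / N g) ^ γ`, and `N` is
positively homogeneous, so `D_N(f, g) = N f * (1 - ∑ a, (f a / N f) * (g a / N g) ^ γ)`. The vectors
`f / N f` and `(g / N g) ^ γ` are unit vectors for the conjugate exponents `1 + γ` and
`(1 + γ) / γ`, so termwise Young's inequality bounds the sum by `1`, with equality only when
`f / N f = g / N g`. As `D_Φ` is a sum of these nonnegative divergences weighted by `f y > 0`,
each of them vanishes; hence `f / g` is constant on every `b(y)`, and two neighbourhoods sharing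
a vertex share the constant.
-/

namespace Real

variable {ι : Type*} [Fintype ι] {p q : ℝ} {a b : ι → ℝ}

theorem sum_young_eq_one (hpq : p.HolderConjugate q) (ha1 : ∑ i, a i ^ p = 1)
    (hb1 : ∑ i, b i ^ q = 1) : ∑ i, (a i ^ p / p + b i ^ q / q) = 1 := by
  rw [Finset.sum_add_distrib, ← Finset.sum_div, ← Finset.sum_div, ha1, hb1, one_div, one_div,
    hpq.inv_add_inv_eq_one]

theorem sum_mul_le_one_of_sum_rpow_eq_one (hpq : p.HolderConjugate q) (ha : 0 ≤ a) (hb : 0 ≤ b)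
    (ha1 : ∑ i, a i ^ p = 1) (hb1 : ∑ i, b i ^ q = 1) : ∑ i, a i * b i ≤ 1 :=
  sum_young_eq_one hpq ha1 hb1 ▸
    Finset.sum_le_sum fun i _ => young_inequality_of_nonneg (ha i) (hb i) hpq

theorem rpow_eq_rpow_of_sum_mul_eq_one (hpq : p.HolderConjugate q) (ha : 0 ≤ a) (hb : 0 ≤ b)
    (ha1 : ∑ i, a i ^ p = 1) (hb1 : ∑ i, b i ^ q = 1) (h : ∑ i, a i * b i = 1) (i : ι) :
    a i ^ p = b i ^ q := by
  rw [← sum_young_eq_one hpq ha1 hb1, Finset.sum_eq_sum_iff_of_le fun i _ =>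
    young_inequality_of_nonneg (ha i) (hb i) hpq] at h
  exact (young_inequality_eq_iff_of_nonneg (ha i) (hb i) hpq).1 (h i (Finset.mem_univ i))

theorem holderConjugate_one_add_div {γ : ℝ} (hγ : 0 < γ) :
    (1 + γ).HolderConjugate ((1 + γ) / γ) := by
  simpa [conjExponent] using HolderConjugate.conjExponent (by linarith : 1 < 1 + γ)

end Real

section psPot

variable {A : Type*} [Fintype A]

theorem psPot_pos [Nonempty A] (γ : ℝ) {f : A → ℝ} (hf : ∀ a, 0 < f a) : 0 < psPot γ f :=
  Real.rpow_pos_of_pos (Finset.sum_pos (fun a _ => Real.rpow_pos_of_pos (hf a) _)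
    Finset.univ_nonempty) _

variable {γ : ℝ}

theorem sum_div_psPot_rpow [Nonempty A] (hγ : 1 + γ ≠ 0) {f : A → ℝ} (hf : ∀ a, 0 < f a) :
    ∑ a, (f a / psPot γ f) ^ (1 + γ) = 1 := by
  have hS : 0 < ∑ a, f a ^ (1 + γ) :=
    Finset.sum_pos (fun a _ => Real.rpow_pos_of_pos (hf a) _) Finset.univ_nonempty
  have hN : psPot γ f ^ (1 + γ) = ∑ a, f a ^ (1 + γ) := by
    rw [psPot, one_div, Real.rpow_inv_rpow hS.le hγ]
  simp_rw [Real.div_rpow (hf _).le (psPot_pos γ hf).le, hN, ← Finset.sum_div, div_self hS.ne']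

theorem fderiv_psPot_apply_single [DecidableEq A] (hγ : 1 + γ ≠ 0) {g : A → ℝ}
    (hg : ∀ a, 0 < g a) (a : A) :
    fderiv ℝ (psPot γ) g (Pi.single a 1) = (g a / psPot γ g) ^ γ := by
  have : Nonempty A := ⟨a⟩
  have hS : 0 < ∑ b, g b ^ (1 + γ) :=
    Finset.sum_pos (fun b _ => Real.rpow_pos_of_pos (hg b) _) Finset.univ_nonempty
  have hderiv : HasFDerivAt (psPot γ) _ g := (HasFDerivAt.fun_sum fun b _ =>
    (hasFDerivAt_apply b g).rpow_const (p := 1 + γ) (Or.inl (hg b).ne')).rpow_const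
    (p := 1 / (1 + γ)) (Or.inl hS.ne')
  rw [hderiv.fderiv]
  simp only [smul_apply, sum_apply, ContinuousLinearMap.proj_apply, Pi.single_apply, smul_eq_mul,
    mul_ite, mul_one, mul_zero, Finset.sum_ite_eq', Finset.mem_univ, if_true, add_sub_cancel_left]
  have hexp : 1 / (1 + γ) - 1 = -(1 / (1 + γ) * γ) := by field_simp; ring
  rw [hexp, Real.rpow_neg hS.le, Real.rpow_mul hS.le,
    Real.div_rpow (hg a).le (psPot_pos γ hg).le, psPot]
  field_simp

theorem bregman_psPot [DecidableEq A] [Nonempty A] (hγ : 1 + γ ≠ 0) {f g : A → ℝ}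
    (hf : ∀ a, 0 < f a) (hg : ∀ a, 0 < g a) :
    bregman (psPot γ) f g = psPot γ f * (1 - ∑ a, f a / psPot γ f * (g a / psPot γ g) ^ γ) := by
  have hNf := (psPot_pos γ hf).ne'
  have hNg := (psPot_pos γ hg).ne'
  have hg_mul : ∀ a, (g a / psPot γ g) ^ γ * g a = psPot γ g * (g a / psPot γ g) ^ (1 + γ) := by
    intro a
    rw [Real.rpow_add (div_pos (hg a) (psPot_pos γ hg)), Real.rpow_one]
    field_simp
  rw [bregman]
  simp_rw [fderiv_psPot_apply_single hγ hg, mul_sub, Finset.sum_sub_distrib, hg_mul,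
    ← Finset.mul_sum, sum_div_psPot_rpow hγ hg, Finset.mul_sum, ← mul_assoc,
    mul_div_cancel₀ _ hNf, mul_comm (f _)]
  ring

theorem sum_div_psPot_rpow_rpow [Nonempty A] (hγ : 0 < γ) {g : A → ℝ} (hg : ∀ a, 0 < g a) :
    ∑ a, ((g a / psPot γ g) ^ γ) ^ ((1 + γ) / γ) = 1 := by
  simp_rw [← Real.rpow_mul (div_pos (hg _) (psPot_pos γ hg)).le, mul_div_cancel₀ _ hγ.ne']
  exact sum_div_psPot_rpow (by linarith) hg

theorem bregman_psPot_nonneg [DecidableEq A] (hγ : 0 < γ) {f g : A → ℝ}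
    (hf : ∀ a, 0 < f a) (hg : ∀ a, 0 < g a) : 0 ≤ bregman (psPot γ) f g := by
  rcases isEmpty_or_nonempty A with hA | hA
  · simp [bregman, psPot]
  rw [bregman_psPot (by linarith) hf hg]
  refine mul_nonneg (psPot_pos γ hf).le (sub_nonneg.2 ?_)
  exact Real.sum_mul_le_one_of_sum_rpow_eq_one (Real.holderConjugate_one_add_div hγ)
    (fun a => (div_pos (hf a) (psPot_pos γ hf)).le)
    (fun a => (Real.rpow_pos_of_pos (div_pos (hg a) (psPot_pos γ hg)) γ).le)
    (sum_div_psPot_rpow (by linarith) hf) (sum_div_psPot_rpow_rpow hγ hg)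

theorem exists_eq_smul_of_bregman_psPot_eq_zero [DecidableEq A] (hγ : 0 < γ) {f g : A → ℝ}
    (hf : ∀ a, 0 < f a) (hg : ∀ a, 0 < g a) (h : bregman (psPot γ) f g = 0) :
    ∃ c : ℝ, 0 < c ∧ f = c • g := by
  rcases isEmpty_or_nonempty A with hA | hA
  · exact ⟨1, one_pos, funext fun a => hA.elim a⟩
  have hNf := psPot_pos γ hf
  have hNg := psPot_pos γ hg
  rw [bregman_psPot (by linarith) hf hg, mul_eq_zero, sub_eq_zero] at h
  have hpow := Real.rpow_eq_rpow_of_sum_mul_eq_one (Real.holderConjugate_one_add_div hγ)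
    (fun a => (div_pos (hf a) hNf).le)
    (fun a => (Real.rpow_pos_of_pos (div_pos (hg a) hNg) γ).le)
    (sum_div_psPot_rpow (by linarith) hf) (sum_div_psPot_rpow_rpow hγ hg)
    (h.resolve_left hNf.ne').symm
  refine ⟨psPot γ f / psPot γ g, div_pos hNf hNg, funext fun a => ?_⟩
  have ha := hpow a
  rw [← Real.rpow_mul (div_pos (hg a) hNg).le, mul_div_cancel₀ _ hγ.ne',
    Real.rpow_left_inj (div_pos (hf a) hNf).le (div_pos (hg a) hNg).le (by linarith)] at ha
  rw [Pi.smul_apply, smul_eq_mul]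
  field_simp at ha ⊢
  linarith

end psPot

theorem DPhi_eq_zero_iff {Y : Type*} [Fintype Y] [DecidableEq Y] {G : SimpleGraph Y}
    [DecidableRel G.Adj] {Y0 : Finset Y} {φ : ∀ y : Y, (↥(G.neighborSet y) → ℝ) → ℝ}
    {f g : Y → ℝ} (hf : ∀ y, 0 < f y)
    (hφ : ∀ y ∈ Y0, 0 ≤ bregman (φ y) (fun z => f z.1 / f y) (fun z => g z.1 / g y)) :
    DPhi G Y0 φ f g = 0 ↔
      ∀ y ∈ Y0, bregman (φ y) (fun z => f z.1 / f y) (fun z => g z.1 / g y) = 0 := by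
  rw [DPhi, Finset.sum_eq_zero_iff_of_nonneg fun y hy => mul_nonneg (hf y).le (hφ y hy)]
  exact forall₂_congr fun y _ => mul_eq_zero_iff_left (hf y).ne'

theorem exists_div_eq_of_DPhi_psPot_eq_zero {Y : Type*} [Fintype Y] [DecidableEq Y]
    {G : SimpleGraph Y} [DecidableRel G.Adj] {Y0 : Finset Y} {γ : ℝ} (hγ : 0 < γ)
    {f g : Y → ℝ} (hf : ∀ y, 0 < f y) (hg : ∀ y, 0 < g y)
    (h : DPhi G Y0 (fun y => psPot γ (A := ↥(G.neighborSet y))) f g = 0) :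
    ∀ y ∈ Y0, ∃ lam : ℝ, 0 < lam ∧ ∀ z ∈ G.neighborSet y, f z / g z = lam := by
  have hpos : ∀ {u : Y → ℝ}, (∀ y, 0 < u y) → ∀ y, ∀ z : ↥(G.neighborSet y), 0 < u z.1 / u y :=
    fun hu y z => div_pos (hu z.1) (hu y)
  have hloc := (DPhi_eq_zero_iff hf fun y _ =>
    bregman_psPot_nonneg hγ (hpos hf y) (hpos hg y)).1 h
  intro y hy
  obtain ⟨c, hc, hfg⟩ :=
    exists_eq_smul_of_bregman_psPot_eq_zero hγ (hpos hf y) (hpos hg y) (hloc y hy)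
  refine ⟨c * (f y / g y), mul_pos hc (div_pos (hf y) (hg y)), fun z hz => ?_⟩
  have hz := congr_fun hfg ⟨z, hz⟩
  rw [Pi.smul_apply, smul_eq_mul] at hz
  have := (hf y).ne'
  have := (hg y).ne'
  have := (hg z).ne'
  field_simp at hz ⊢
  linear_combination hz

/-- If the composite local Bregman divergence built from the local
pseudo-spherical potentials vanishes at `(f, g)`, then on each neighborhood `b(y)`, `y ∈ 𝒴₀`,
the ratios `f z / g z` are constant; consequently if `b(y) ∩ b(y') ≠ ∅` for `y, y' ∈ 𝒴₀`,
all the ratios `f z / g z` for `z ∈ b(y) ∪ b(y')` coincide. -/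
theorem stmt2 {Y : Type*} [Fintype Y] [DecidableEq Y]
    (G : SimpleGraph Y) [DecidableRel G.Adj] (Y0 : Finset Y)
    (γ : ℝ) (hγ : 0 < γ)
    (f g : Y → ℝ) (hf : f ∈ posOrth Y) (hg : g ∈ posOrth Y)
    (h : DPhi G Y0 (fun y => psPot γ (A := ↥(G.neighborSet y))) f g = 0) :
    (∀ y ∈ Y0, ∃ lam : ℝ, 0 < lam ∧ ∀ z ∈ G.neighborSet y, f z / g z = lam) ∧
    (∀ y ∈ Y0, ∀ y' ∈ Y0, (G.neighborSet y ∩ G.neighborSet y').Nonempty →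
      ∀ z ∈ G.neighborSet y ∪ G.neighborSet y',
        ∀ z' ∈ G.neighborSet y ∪ G.neighborSet y', f z / g z = f z' / g z') := by
  have hconst := exists_div_eq_of_DPhi_psPot_eq_zero hγ hf hg h
  refine ⟨hconst, fun y hy y' hy' ⟨z₀, hz₀, hz₀'⟩ z hz z' hz' => ?_⟩
  obtain ⟨c, -, hc⟩ := hconst y hy
  obtain ⟨c', -, hc'⟩ := hconst y' hy'
  have hunion : ∀ w ∈ G.neighborSet y ∪ G.neighborSet y', f w / g w = c := by
    rintro w (hw | hw)
    · exact hc w hw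
    · rw [hc' w hw, ← hc' z₀ hz₀', hc z₀ hz₀]
  rw [hunion z hz, hunion z' hz']
end

section
/- Let 𝒴 = {±1}^D, let A₁, …, A_m be subsets of {1, …, D}, and define the undirected graph G = (𝒴, E) by (y, z) ∈ E if and only if y ≠ z and there exists ℓ ∈ {1,…,m} such that y_{A_ℓᶜ} = z_{A_ℓᶜ}. With 𝒴₀ = 𝒴, define G₀ = (𝒴₀, E₀) by (y, y') ∈ E₀ iff y ≠ y' and n(y) ∩ n(y') ≠ ∅, where n(y) = b(y) ∪ {y}. Then G₀ is connected if and only if ⋃_{ℓ=1}^m A_ℓ = {1, …, D}. -/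
open scoped BigOperators

/-- The overlap graph `G₀` in the case `𝒴₀ = 𝒴`, defined directly on `𝒴`. -/
def overlapGraphFull {Y : Type*} (G : SimpleGraph Y) : SimpleGraph Y where
  Adj a b := a ≠ b ∧ (nbd G a ∩ nbd G b).Nonempty
  symm := by
    constructor
    intro a b h
    exact ⟨h.1.symm, by rw [Set.inter_comm]; exact h.2⟩
  loopless := ⟨fun a h => h.1 rfl⟩

/-- The neighborhood graph of the composite likelihood on `{±1}^D` (here `Fin D → Bool`):
`y` and `z` are adjacent iff `y ≠ z` and they agree outside some `A ℓ`. -/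
def clGraph (D m : ℕ) (A : Fin m → Finset (Fin D)) : SimpleGraph (Fin D → Bool) where
  Adj y z := y ≠ z ∧ ∃ ℓ : Fin m, ∀ i : Fin D, i ∉ A ℓ → y i = z i
  symm := by
    constructor
    rintro y z ⟨h1, ℓ, h2⟩
    exact ⟨h1.symm, ℓ, fun i hi => (h2 i hi).symm⟩
  loopless := ⟨fun y h => h.1 rfl⟩

/-!
`G₀` contains `G`, and two vertices adjacent in `G₀` are joined by a path of length at most two
in `G`; hence `G₀` is connected iff `G` is. If a coordinate `i` lies in no `A ℓ`, every edge of `G`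
preserves `yᵢ`, so `G` is disconnected. Conversely, if the `A ℓ` cover `{1, …, D}`, every
single-coordinate flip is an edge of `G`, and flipping the coordinates where `y` and `z` differ
one at a time walks from `y` to `z`.
-/

namespace SimpleGraph

variable {V : Type*}

lemma Reachable.eq_of_adj_imp_eq {β : Type*} {G : SimpleGraph V} {f : V → β}
    (hf : ∀ a b, G.Adj a b → f a = f b) {a b : V} (h : G.Reachable a b) : f a = f b := by
  rw [reachable_iff_reflTransGen] at h
  induction h with
  | refl => rfl
  | tail _ hbc ih => exact ih.trans (hf _ _ hbc)

lemma reachable_le_of_adj_le_reachable {G H : SimpleGraph V} (h : H.Adj ≤ G.Reachable) :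
    H.Reachable ≤ G.Reachable := by
  simp only [reachable_eq_reflTransGen] at h ⊢
  exact Relation.reflTransGen_closed h

lemma le_overlapGraphFull (G : SimpleGraph V) : G ≤ overlapGraphFull G :=
  fun a _ hab => ⟨hab.ne, a, Set.mem_insert a _, Set.mem_insert_of_mem _ hab.symm⟩

lemma reachable_of_mem_nbd {G : SimpleGraph V} {a w : V} (h : w ∈ nbd G a) : G.Reachable a w := by
  rcases h with rfl | haw
  · rfl
  · exact haw.reachable

lemma overlapGraphFull_adj_le_reachable (G : SimpleGraph V) :
    (overlapGraphFull G).Adj ≤ G.Reachable := by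
  rintro a b ⟨-, w, haw, hbw⟩
  exact (reachable_of_mem_nbd haw).trans (reachable_of_mem_nbd hbw).symm

theorem overlapGraphFull_connected_iff {G : SimpleGraph V} :
    (overlapGraphFull G).Connected ↔ G.Connected := by
  refine ⟨fun h => (connected_iff _).mpr ⟨fun a b => ?_, h.nonempty⟩,
    Connected.mono (le_overlapGraphFull G)⟩
  exact reachable_le_of_adj_le_reachable (overlapGraphFull_adj_le_reachable G) a b
    (h.preconnected a b)

end SimpleGraph

section clGraph

variable {D m : ℕ} {A : Fin m → Finset (Fin D)}

lemma clGraph_reachable_update {ℓ : Fin m} {i : Fin D} (hi : i ∈ A ℓ) (y : Fin D → Bool)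
    (b : Bool) : (clGraph D m A).Reachable y (Function.update y i b) := by
  by_cases hy : y = Function.update y i b
  · exact hy ▸ .rfl
  refine SimpleGraph.Adj.reachable ⟨hy, ℓ, fun j hj => ?_⟩
  rw [Function.update_of_ne (ne_of_mem_of_not_mem hi hj).symm]

lemma clGraph_reachable_of_eqOn_compl (hcov : ∀ i, ∃ ℓ, i ∈ A ℓ) (s : Finset (Fin D)) :
    ∀ y z : Fin D → Bool, (∀ i ∉ s, y i = z i) → (clGraph D m A).Reachable y z := by
  classical
  induction s using Finset.induction_on with
  | empty =>
    intro y z h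
    exact funext (fun i => h i (Finset.notMem_empty i)) ▸ .rfl
  | insert i s _ ih =>
    intro y z h
    obtain ⟨ℓ, hi⟩ := hcov i
    refine (clGraph_reachable_update hi y (z i)).trans (ih _ z fun j hj => ?_)
    by_cases hji : j = i
    · rw [hji, Function.update_self]
    · rw [Function.update_of_ne hji]
      exact h j (by simp [hji, hj])

theorem clGraph_connected_iff :
    (clGraph D m A).Connected ↔ (⋃ ℓ : Fin m, (A ℓ : Set (Fin D))) = Set.univ := by
  simp only [Set.eq_univ_iff_forall, Set.mem_iUnion, Finset.mem_coe]
  refine ⟨fun hconn i => ?_, fun hcov => (SimpleGraph.connected_iff _).mpr ⟨fun y z =>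
    clGraph_reachable_of_eqOn_compl hcov Finset.univ y z (by simp), inferInstance⟩⟩
  by_contra! hi
  have hpres : ∀ y z, (clGraph D m A).Adj y z → y i = z i :=
    fun _ _ ⟨_, ℓ, hyz⟩ => hyz i (hi ℓ)
  simpa using (hconn.preconnected (fun _ => true) (fun _ => false)).eq_of_adj_imp_eq hpres

end clGraph

/-- With `𝒴₀ = 𝒴`, the overlap graph `G₀` of the composite-likelihood
neighborhood system is connected iff `⋃ ℓ A_ℓ = {1, …, D}`. -/
theorem stmt4 (D m : ℕ) (A : Fin m → Finset (Fin D)) :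
    (overlapGraphFull (clGraph D m A)).Connected ↔
      (⋃ ℓ : Fin m, (A ℓ : Set (Fin D))) = Set.univ := by
  rw [SimpleGraph.overlapGraphFull_connected_iff, clGraph_connected_iff]
end

section
/- Let G = (𝒴, E) be an undirected graph without loops on the finite set 𝒴, let 𝒴₀ = 𝒴, and suppose each local potential is additive: φ_y(f) = Σ_{z∈b(y)} φ_{yz}(f_z), where each φ_{yz} : ℝ_{>0} → ℝ is differentiable and convex. Then the proper homogeneous score obtained as the negative gradient of the G-local potential φ(f) = Σ_{y∈𝒴} f_y φ_y(f_{b(y)}/f_y) equals S(y, f) = −∂_y φ(f) = Σ_{z∈b(y)} { −φ_{yz}(f_z/f_y) + (f_z/f_y) φ'_{yz}(f_z/f_y) − φ'_{zy}(f_y/f_z) }, which depends on f only through (f_z)_{z∈n(y)}; i.e. the score is G-local. -/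
open scoped BigOperators

/-! The potential is a sum of perspective terms `f_x φ_{xz}(f_z / f_x)`, one for each ordered pair
of adjacent vertices. Such a term depends on `f_x` and `f_z` only, with partial derivatives
`φ_{xz}(r) - r φ'_{xz}(r)` in `f_x` and `φ'_{xz}(r)` in `f_z`, where `r = f_z / f_x`. Differentiating in
`f_y` therefore picks up only the pairs `(y, z)` and `(z, y)` with `z` a neighbour of `y`, which gives the
formula; locality is read off from it. -/

theorem hasFDerivAt_mul_comp_div {ι : Type*} [Fintype ι] {ψ : ℝ → ℝ} {g : ι → ℝ} {x z : ι}
    (hx : g x ≠ 0) (hψ : DifferentiableAt ℝ ψ (g z / g x)) :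
    HasFDerivAt (fun h : ι → ℝ => h x * ψ (h z / h x))
      ((ψ (g z / g x) - g z / g x * deriv ψ (g z / g x)) • ContinuousLinearMap.proj x
        + deriv ψ (g z / g x) • ContinuousLinearMap.proj z : (ι → ℝ) →L[ℝ] ℝ) g := by
  have hpx : HasFDerivAt (fun h : ι → ℝ => h x) (ContinuousLinearMap.proj (R := ℝ) x) g :=
    hasFDerivAt_apply x g
  have hratio := (hasFDerivAt_apply z g).fun_mul ((hasDerivAt_inv hx).comp_hasFDerivAt g hpx)
  have hterm := hpx.fun_mul
    (hψ.hasDerivAt.comp_hasFDerivAt (f := fun h : ι → ℝ => h z * (h x)⁻¹) g hratio)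
  simp only [← div_eq_mul_inv] at hterm
  refine hterm.congr_fderiv ?_
  ext v
  simp only [neg_smul, smul_neg, Function.comp_apply, smul_add, add_apply, neg_apply, smul_apply,
    ContinuousLinearMap.proj_apply, smul_eq_mul]
  field_simp
  ring

section LocalPotential

variable {Y : Type*} [Fintype Y] (G : SimpleGraph Y) [DecidableRel G.Adj] (φ : Y → Y → ℝ → ℝ)

noncomputable def localPotential (h : Y → ℝ) : ℝ :=
  ∑ x, h x * ∑ z ∈ G.neighborFinset x, φ x z (h z / h x)

variable {G φ}

theorem hasFDerivAt_localPotential {g : Y → ℝ} (hg : ∀ x, g x ≠ 0)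
    (hφ : ∀ x, ∀ z ∈ G.neighborFinset x, DifferentiableAt ℝ (φ x z) (g z / g x)) :
    HasFDerivAt (localPotential G φ)
      (∑ x, ∑ z ∈ G.neighborFinset x,
        ((φ x z (g z / g x) - g z / g x * deriv (φ x z) (g z / g x)) • ContinuousLinearMap.proj x
          + deriv (φ x z) (g z / g x) • ContinuousLinearMap.proj z : (Y → ℝ) →L[ℝ] ℝ)) g := by
  unfold localPotential
  simp only [Finset.mul_sum]
  exact HasFDerivAt.fun_sum fun x _ ↦ HasFDerivAt.fun_sum fun z hz ↦
    hasFDerivAt_mul_comp_div (hg x) (hφ x z hz)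

theorem neg_fderiv_localPotential_single [DecidableEq Y] {g : Y → ℝ} (hg : ∀ x, g x ≠ 0)
    (hφ : ∀ x, ∀ z ∈ G.neighborFinset x, DifferentiableAt ℝ (φ x z) (g z / g x)) (y : Y) :
    -fderiv ℝ (localPotential G φ) g (Pi.single y 1) =
      ∑ z ∈ G.neighborFinset y, (-φ y z (g z / g y) + g z / g y * deriv (φ y z) (g z / g y)
        - deriv (φ z y) (g y / g z)) := by
  have sum_adj_right (a : Y → ℝ) :
      (∑ x, if G.Adj x y then a x else 0) = ∑ x ∈ G.neighborFinset y, a x := by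
    rw [← Finset.sum_filter, G.neighborFinset_eq_filter]
    simp only [G.adj_comm]
  rw [(hasFDerivAt_localPotential hg hφ).fderiv]
  simp only [Finset.sum_add_distrib, add_apply, sum_apply, smul_apply, ContinuousLinearMap.proj_apply,
    Pi.single_apply, smul_eq_mul, mul_ite, mul_one, mul_zero, Finset.sum_ite_irrel,
    Finset.sum_sub_distrib, Finset.sum_const_zero, Finset.sum_ite_eq', Finset.mem_univ, ↓reduceIte,
    SimpleGraph.mem_neighborFinset, sum_adj_right, neg_add_rev, neg_sub, Finset.sum_neg_distrib]
  ring

end LocalPotential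

theorem stmt16_general {Y : Type*} [Fintype Y] [DecidableEq Y]
    (G : SimpleGraph Y) [DecidableRel G.Adj]
    (φ : Y → Y → ℝ → ℝ)
    (hdiff : ∀ x z : Y, z ∈ G.neighborSet x → DifferentiableOn ℝ (φ x z) (Set.Ioi 0))
    (f : Y → ℝ) (hf : f ∈ posOrth Y) (y : Y) :
    (-(fderiv ℝ
        (fun h : Y → ℝ => ∑ x : Y, h x * ∑ z ∈ G.neighborFinset x, φ x z (h z / h x))
        f (Pi.single y 1))
      = ∑ z ∈ G.neighborFinset y,
          (-(φ y z (f z / f y)) + (f z / f y) * deriv (φ y z) (f z / f y)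
            - deriv (φ z y) (f y / f z))) ∧
    (∀ f' ∈ posOrth Y, (∀ w ∈ nbd G y, f w = f' w) →
      -(fderiv ℝ
          (fun h : Y → ℝ => ∑ x : Y, h x * ∑ z ∈ G.neighborFinset x, φ x z (h z / h x))
          f (Pi.single y 1))
        = -(fderiv ℝ
            (fun h : Y → ℝ => ∑ x : Y, h x * ∑ z ∈ G.neighborFinset x, φ x z (h z / h x))
            f' (Pi.single y 1))) := by
  have hscore : ∀ g ∈ posOrth Y, -fderiv ℝ (localPotential G φ) g (Pi.single y 1) =
      ∑ z ∈ G.neighborFinset y, (-φ y z (g z / g y) + g z / g y * deriv (φ y z) (g z / g y)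
        - deriv (φ z y) (g y / g z)) := fun g hg ↦
    neg_fderiv_localPotential_single (fun x ↦ (hg x).ne') (fun x z hz ↦
      (hdiff x z (by simpa using hz)).differentiableAt
        (Ioi_mem_nhds (div_pos (hg z) (hg x)))) y
  refine ⟨hscore f hf, fun f' hf' hff' ↦ (hscore f hf).trans (Eq.trans ?_ (hscore f' hf').symm)⟩
  refine Finset.sum_congr rfl fun z hz ↦ ?_
  rw [hff' y (Set.mem_insert _ _), hff' z (Set.mem_insert_of_mem _ (by simpa using hz))]

/-- For additive local potentials `φ_y(f) = Σ_{z∈b(y)} φ_{yz}(f_z)` with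
each `φ_{yz}` differentiable and convex on `ℝ_{>0}`, and `𝒴₀ = 𝒴`, the proper homogeneous
score `S(y, f) = −∂_y φ(f)` obtained from the `G`-local potential
`φ(f) = Σ_x f_x Σ_{z∈b(x)} φ_{xz}(f_z/f_x)` equals
`Σ_{z∈b(y)} { −φ_{yz}(f_z/f_y) + (f_z/f_y) φ'_{yz}(f_z/f_y) − φ'_{zy}(f_y/f_z) }`;
in particular the score depends on `f` only through the components in `n(y)`,
i.e. it is `G`-local. -/
theorem stmt16 {Y : Type*} [Fintype Y] [DecidableEq Y]
    (G : SimpleGraph Y) [DecidableRel G.Adj]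
    (φ : Y → Y → ℝ → ℝ)
    (hconv : ∀ x z : Y, z ∈ G.neighborSet x → ConvexOn ℝ (Set.Ioi 0) (φ x z))
    (hdiff : ∀ x z : Y, z ∈ G.neighborSet x → DifferentiableOn ℝ (φ x z) (Set.Ioi 0))
    (f : Y → ℝ) (hf : f ∈ posOrth Y) (y : Y) :
    (-(fderiv ℝ
        (fun h : Y → ℝ => ∑ x : Y, h x * ∑ z ∈ G.neighborFinset x, φ x z (h z / h x))
        f (Pi.single y 1))
      = ∑ z ∈ G.neighborFinset y,
          (-(φ y z (f z / f y)) + (f z / f y) * deriv (φ y z) (f z / f y)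
            - deriv (φ z y) (f y / f z))) ∧
    (∀ f' ∈ posOrth Y, (∀ w ∈ nbd G y, f w = f' w) →
      -(fderiv ℝ
          (fun h : Y → ℝ => ∑ x : Y, h x * ∑ z ∈ G.neighborFinset x, φ x z (h z / h x))
          f (Pi.single y 1))
        = -(fderiv ℝ
            (fun h : Y → ℝ => ∑ x : Y, h x * ∑ z ∈ G.neighborFinset x, φ x z (h z / h x))
            f' (Pi.single y 1))) :=
  stmt16_general G φ hdiff f hf y
end

section
/- Let 𝒴 = {±1}², let G = (𝒴, E) be the graph with (y, y') ∈ E iff d_H(y, y') = 1, with 𝒴₀ = 𝒴, and fix γ > 0. Let Φ consist of the local pseudo-spherical potentials φ_y(f) = (Σ_{z∈b(y)} f_z^{1+γ})^{1/(1+γ)}. Define the probability vectors p and q by p_{(+1,+1)} = p_{(−1,−1)} = 0.1, p_{(−1,+1)} = p_{(+1,−1)} = 0.4 and q_{(+1,+1)} = q_{(−1,−1)} = 0.2, q_{(−1,+1)} = q_{(+1,−1)} = 0.3. Then D_Φ(p, q) = 0 although p ≠ q; hence the composite local Bregman divergence of the local pseudo-spherical potentials with the Hamming-distance-1 neighborhood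 system does not satisfy the coincidence axiom on 𝒫. -/
/-! The pseudo-spherical potential is positively homogeneous of degree one, so by Euler's
identity its Bregman divergence vanishes between proportional vectors. On the square every
neighbour of `y` has the parity opposite to `y`, and `p / q` is constant on each parity class;
hence the local ratio vectors `p_{b(y)} / p_y` and `q_{b(y)} / q_y` are proportional for every
`y`, and every term of `D_Φ(p, q)` vanishes. -/

open scoped BigOperators

/-- The Hamming-distance-1 graph on `{±1}²` (here `Bool × Bool`, `true ↔ +1`). -/
def sqGraph : SimpleGraph (Bool × Bool) where
  Adj y z := (y.1 = z.1 ∧ y.2 ≠ z.2) ∨ (y.1 ≠ z.1 ∧ y.2 = z.2)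
  symm := by
    constructor
    rintro y z (⟨h1, h2⟩ | ⟨h1, h2⟩)
    · exact Or.inl ⟨h1.symm, fun h => h2 h.symm⟩
    · exact Or.inr ⟨fun h => h1 h.symm, h2.symm⟩
  loopless := by
    constructor
    rintro y (⟨_, h⟩ | ⟨h, _⟩) <;> exact h rfl

instance : DecidableRel sqGraph.Adj := fun a b =>
  inferInstanceAs (Decidable ((a.1 = b.1 ∧ a.2 ≠ b.2) ∨ (a.1 ≠ b.1 ∧ a.2 = b.2)))

/-- `p_{(+1,+1)} = p_{(−1,−1)} = 0.1`, `p_{(−1,+1)} = p_{(+1,−1)} = 0.4`. -/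
noncomputable def pVec : Bool × Bool → ℝ := fun y => if y.1 = y.2 then 0.1 else 0.4

/-- `q_{(+1,+1)} = q_{(−1,−1)} = 0.2`, `q_{(−1,+1)} = q_{(+1,−1)} = 0.3`. -/
noncomputable def qVec : Bool × Bool → ℝ := fun y => if y.1 = y.2 then 0.2 else 0.3

theorem ContinuousLinearMap.sum_apply_single_mul {A : Type*} [Fintype A] [DecidableEq A]
    (L : (A → ℝ) →L[ℝ] ℝ) (x : A → ℝ) : ∑ a, L (Pi.single a 1) * x a = L x := by
  conv_rhs => rw [← Finset.univ_sum_single x, map_sum]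
  refine Finset.sum_congr rfl fun a _ => ?_
  rw [mul_comm, ← smul_eq_mul, ← L.map_smul, ← Pi.single_smul', smul_eq_mul, mul_one]

/-- Euler's identity. -/
theorem fderiv_apply_self_of_smul_eq {A : Type*} [Fintype A] {φ : (A → ℝ) → ℝ} {g : A → ℝ}
    (hhom : ∀ s : ℝ, 0 < s → φ (s • g) = s * φ g) (hφ : DifferentiableAt ℝ φ g) :
    fderiv ℝ φ g g = φ g := by
  have hray : HasDerivAt (fun s : ℝ => φ (s • g)) (fderiv ℝ φ g g) 1 := by
    have hφ' : HasFDerivAt φ (fderiv ℝ φ g) ((1 : ℝ) • g) := by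
      simpa using hφ.hasFDerivAt
    have := hφ'.comp_hasDerivAt (1 : ℝ) (hasDerivAt_id (1 : ℝ) |>.smul_const g)
    rwa [one_smul] at this
  have hlin : HasDerivAt (fun s : ℝ => φ (s • g)) (φ g) 1 := by
    refine ((hasDerivAt_id (1 : ℝ)).mul_const (φ g)).congr_of_eventuallyEq ?_ |>.congr_deriv
      (one_mul _)
    filter_upwards [lt_mem_nhds one_pos] with s hs using hhom s hs
  exact hray.unique hlin

theorem bregman_smul_self_eq_zero {A : Type*} [Fintype A] [DecidableEq A]
    {φ : (A → ℝ) → ℝ} {g : A → ℝ} (hhom : ∀ s : ℝ, 0 < s → φ (s • g) = s * φ g)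
    (hφ : DifferentiableAt ℝ φ g) {t : ℝ} (ht : 0 < t) : bregman φ (t • g) g = 0 := by
  have hlin : ∑ a, fderiv ℝ φ g (Pi.single a 1) * ((t • g) a - g a)
      = fderiv ℝ φ g ((t - 1) • g) := by
    rw [← ContinuousLinearMap.sum_apply_single_mul]
    simp only [Pi.smul_apply, smul_eq_mul, sub_mul, one_mul]
  rw [bregman, hlin, map_smul, smul_eq_mul,
    fderiv_apply_self_of_smul_eq hhom hφ, hhom t ht]
  ring

theorem psPot_smul {γ : ℝ} (hγ : 1 + γ ≠ 0) {A : Type*} [Fintype A] {f : A → ℝ}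
    (hf : ∀ a, 0 ≤ f a) {s : ℝ} (hs : 0 ≤ s) : psPot γ (s • f) = s * psPot γ f := by
  have hpow : ∀ a, (s • f) a ^ (1 + γ) = s ^ (1 + γ) * f a ^ (1 + γ) := fun a =>
    Real.mul_rpow hs (hf a)
  rw [psPot, psPot, Finset.sum_congr rfl fun a _ => hpow a, ← Finset.mul_sum,
    Real.mul_rpow (Real.rpow_nonneg hs _)
      (Finset.sum_nonneg fun a _ => Real.rpow_nonneg (hf a) _),
    ← Real.rpow_mul hs, mul_one_div_cancel hγ, Real.rpow_one]

theorem differentiableAt_psPot (γ : ℝ) {A : Type*} [Fintype A] {g : A → ℝ}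
    (hg : g ∈ posOrth A) : DifferentiableAt ℝ (psPot γ) g := by
  rcases isEmpty_or_nonempty A with hA | hA
  · have hconst : psPot γ (A := A) = fun _ => psPot γ g :=
      funext fun f => congrArg _ (Subsingleton.elim f g)
    rw [hconst]
    exact differentiableAt_const _
  · have hsum : DifferentiableAt ℝ (fun f : A → ℝ => ∑ a, f a ^ (1 + γ)) g :=
      DifferentiableAt.fun_sum fun a _ =>
        (differentiableAt_apply a g).rpow_const (Or.inl (hg a).ne')
    have hpos : 0 < ∑ a, g a ^ (1 + γ) :=
      Finset.sum_pos (fun a _ => Real.rpow_pos_of_pos (hg a) _) Finset.univ_nonempty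
    exact hsum.rpow_const (Or.inl hpos.ne')

theorem DPhi_eq_zero_of_proportional_on_neighborSet {Y : Type*} [Fintype Y] [DecidableEq Y]
    (G : SimpleGraph Y) [DecidableRel G.Adj] (Y0 : Finset Y)
    {φ : ∀ y : Y, (↥(G.neighborSet y) → ℝ) → ℝ}
    (hhom : ∀ y ∈ Y0, ∀ h ∈ posOrth _, ∀ s : ℝ, 0 < s → φ y (s • h) = s * φ y h)
    (hdiff : ∀ y ∈ Y0, ∀ h ∈ posOrth _, DifferentiableAt ℝ (φ y) h)
    {f g : Y → ℝ} (hf : f ∈ posOrth Y) (hg : g ∈ posOrth Y)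
    (hprop : ∀ y ∈ Y0, ∃ c : ℝ, 0 < c ∧ ∀ z, G.Adj y z → f z = c * g z) :
    DPhi G Y0 φ f g = 0 := by
  refine Finset.sum_eq_zero fun y hy => ?_
  obtain ⟨c, hc, hfg⟩ := hprop y hy
  have hratio : (fun z : ↥(G.neighborSet y) => f z.1 / f y)
      = (c * g y / f y) • fun z : ↥(G.neighborSet y) => g z.1 / g y := by
    ext z
    rw [Pi.smul_apply, smul_eq_mul, hfg z.1 z.2]
    field_simp [(hf y).ne', (hg y).ne']
  have hgy : (fun z : ↥(G.neighborSet y) => g z.1 / g y) ∈ posOrth _ := fun z =>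
    div_pos (hg z.1) (hg y)
  rw [hratio, bregman_smul_self_eq_zero (hhom y hy _ hgy) (hdiff y hy _ hgy)
    (by have := hf y; have := hg y; positivity), mul_zero]

theorem sqGraph_adj_parity {y z : Bool × Bool} (h : sqGraph.Adj y z) :
    (z.1 = z.2 ↔ y.1 ≠ y.2) := by
  obtain ⟨y1, y2⟩ := y
  obtain ⟨z1, z2⟩ := z
  revert h
  cases y1 <;> cases y2 <;> cases z1 <;> cases z2 <;> decide

theorem pVec_mem_probSet : pVec ∈ probSet (Bool × Bool) := by
  refine ⟨fun y => ?_, ?_⟩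
  · unfold pVec; split <;> norm_num
  · simp only [Fintype.sum_prod_type, Fintype.sum_bool, pVec]; norm_num

theorem qVec_mem_probSet : qVec ∈ probSet (Bool × Bool) := by
  refine ⟨fun y => ?_, ?_⟩
  · unfold qVec; split <;> norm_num
  · simp only [Fintype.sum_prod_type, Fintype.sum_bool, qVec]; norm_num

theorem pVec_ne_qVec : pVec ≠ qVec := fun h => by
  have := congrFun h (true, true)
  norm_num [pVec, qVec] at this

theorem pVec_proportional_qVec_on_neighborSet (y : Bool × Bool) :
    ∃ c : ℝ, 0 < c ∧ ∀ z, sqGraph.Adj y z → pVec z = c * qVec z := by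
  by_cases hy : y.1 = y.2
  · refine ⟨4 / 3, by norm_num, fun z hz => ?_⟩
    have hz' : z.1 ≠ z.2 := by rw [Ne, sqGraph_adj_parity hz]; exact not_not.mpr hy
    norm_num [pVec, qVec, hz']
  · refine ⟨1 / 2, by norm_num, fun z hz => ?_⟩
    norm_num [pVec, qVec, (sqGraph_adj_parity hz).mpr hy]

/-- On `𝒴 = {±1}²` with the Hamming-distance-1 neighborhood system and
`𝒴₀ = 𝒴`, the composite local Bregman divergence of the local pseudo-spherical potentials
vanishes at the probability vectors `p ≠ q` above; hence it does not satisfy the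
coincidence axiom on `𝒫`. -/
theorem stmt17 (γ : ℝ) (hγ : 0 < γ) :
    pVec ∈ probSet (Bool × Bool) ∧ qVec ∈ probSet (Bool × Bool) ∧
    DPhi sqGraph Finset.univ
      (fun y => psPot γ (A := ↥(sqGraph.neighborSet y))) pVec qVec = 0 ∧
    pVec ≠ qVec ∧
    ¬ (∀ p ∈ probSet (Bool × Bool), ∀ q ∈ probSet (Bool × Bool),
        DPhi sqGraph Finset.univ
          (fun y => psPot γ (A := ↥(sqGraph.neighborSet y))) p q = 0 → p = q) := by
  have hD : DPhi sqGraph Finset.univ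
      (fun y => psPot γ (A := ↥(sqGraph.neighborSet y))) pVec qVec = 0 :=
    DPhi_eq_zero_of_proportional_on_neighborSet sqGraph Finset.univ
      (fun _ _ _ hh _ hs => psPot_smul (by linarith) (fun a => (hh a).le) hs.le)
      (fun _ _ _ hh => differentiableAt_psPot γ hh)
      pVec_mem_probSet.1 qVec_mem_probSet.1
      (fun y _ => pVec_proportional_qVec_on_neighborSet y)
  exact ⟨pVec_mem_probSet, qVec_mem_probSet, hD, pVec_ne_qVec,
    fun h => pVec_ne_qVec (h _ pVec_mem_probSet _ qVec_mem_probSet hD)⟩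
end

section
/- Let G = (𝒴, E) be a connected undirected graph without loops on the finite set 𝒴 with 𝒴₀ = 𝒴, and for each y ∈ 𝒴 let b₁(y), …, b_m(y) ⊆ b(y) be subsets with ⋃_{ℓ=1}^m b_ℓ(y) = b(y), and let φ_y(g) = −Σ_{ℓ=1}^m log(1 + Σ_{z∈b_ℓ(y)} g_z) be the extended composite likelihood local potential. If for every y ∈ 𝒴 the indicator vectors 𝟏_{b₁(y)}, …, 𝟏_{b_m(y)} span ℝ^{b(y)}, then the composite local Bregman divergence D_Φ satisfies the coincidence axiom on 𝒫: for all p, q ∈ 𝒫, D_Φ(p, q) = 0 implies p = q. -/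
open scoped BigOperators

/-! The potential `φ_y = -∑_ℓ log (1 + ⟪𝟏_{b_ℓ(y)}, ·⟫)` is minus a sum of logarithms of affine
maps, so its Bregman divergence is `∑_ℓ (t_ℓ - 1 - log t_ℓ)`, where `t_ℓ` is the ratio of the two
affine values. Each summand is nonnegative and vanishes only at `t_ℓ = 1`, so `D_Φ(p, q) = 0`
forces `⟪𝟏_{b_ℓ(y)}, p/p_y - q/q_y⟫ = 0` for all `ℓ`; as the indicators span, `p_z/p_y = q_z/q_y`
for every edge `yz`. Thus `p/q` is constant along edges, hence on the connected graph, and the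
normalisation `∑ p = ∑ q = 1` makes the constant `1`. -/

open scoped Matrix

theorem bregman_eq_sub_sub_fderiv {A : Type*} [Fintype A] [DecidableEq A]
    (φ : (A → ℝ) → ℝ) (f g : A → ℝ) :
    bregman φ f g = φ f - φ g - fderiv ℝ φ g (f - g) := by
  conv_rhs => rw [pi_eq_sum_univ' (f - g)]
  simp [bregman, mul_comm]

section CompositeLikelihood

variable {A ι : Type*} [Fintype A] [Fintype ι]

noncomputable def compositeLikelihoodPot (e : ι → A → ℝ) (v : A → ℝ) : ℝ :=
  -∑ ℓ, Real.log (1 + e ℓ ⬝ᵥ v)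

theorem hasFDerivAt_compositeLikelihoodPot (e : ι → A → ℝ) {g : A → ℝ}
    (hg : ∀ ℓ, 1 + e ℓ ⬝ᵥ g ≠ 0) :
    HasFDerivAt (compositeLikelihoodPot e)
      (-∑ ℓ, (1 + e ℓ ⬝ᵥ g)⁻¹ • LinearMap.toContinuousLinearMap (dotProductBilin ℝ ℝ (e ℓ)))
      g := by
  refine (HasFDerivAt.fun_sum fun ℓ _ => ?_).neg
  exact (((LinearMap.toContinuousLinearMap (dotProductBilin ℝ ℝ (e ℓ))).hasFDerivAt).const_add
    1).log (hg ℓ)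

theorem bregman_compositeLikelihoodPot [DecidableEq A] (e : ι → A → ℝ) {f g : A → ℝ}
    (hf : ∀ ℓ, 0 < 1 + e ℓ ⬝ᵥ f) (hg : ∀ ℓ, 0 < 1 + e ℓ ⬝ᵥ g) :
    bregman (compositeLikelihoodPot e) f g =
      ∑ ℓ, ((1 + e ℓ ⬝ᵥ f) / (1 + e ℓ ⬝ᵥ g) - 1 - Real.log ((1 + e ℓ ⬝ᵥ f) / (1 + e ℓ ⬝ᵥ g))) := by
  rw [bregman_eq_sub_sub_fderiv,
    (hasFDerivAt_compositeLikelihoodPot e fun ℓ => (hg ℓ).ne').fderiv]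
  simp only [compositeLikelihoodPot, neg_apply, sum_apply, smul_apply,
    LinearMap.coe_toContinuousLinearMap', dotProductBilin_apply_apply, smul_eq_mul, dotProduct_sub,
    sub_neg_eq_add, neg_add_eq_sub, ← Finset.sum_sub_distrib, ← Finset.sum_add_distrib]
  refine Finset.sum_congr rfl fun ℓ _ => ?_
  have hgℓ := (hg ℓ).ne'
  rw [Real.log_div (hf ℓ).ne' hgℓ]
  field_simp
  ring

theorem sub_one_sub_log_nonneg {t : ℝ} (ht : 0 < t) : 0 ≤ t - 1 - Real.log t := by
  linarith [Real.log_le_sub_one_of_pos ht]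

theorem sub_one_sub_log_eq_zero_iff {t : ℝ} (ht : 0 < t) : t - 1 - Real.log t = 0 ↔ t = 1 := by
  refine ⟨fun h => ?_, fun h => by simp [h]⟩
  by_contra hne
  linarith [Real.log_lt_sub_one_of_pos ht hne]

theorem bregman_compositeLikelihoodPot_nonneg [DecidableEq A] (e : ι → A → ℝ) {f g : A → ℝ}
    (hf : ∀ ℓ, 0 < 1 + e ℓ ⬝ᵥ f) (hg : ∀ ℓ, 0 < 1 + e ℓ ⬝ᵥ g) :
    0 ≤ bregman (compositeLikelihoodPot e) f g := by
  rw [bregman_compositeLikelihoodPot e hf hg]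
  exact Finset.sum_nonneg fun ℓ _ => sub_one_sub_log_nonneg (div_pos (hf ℓ) (hg ℓ))

theorem bregman_compositeLikelihoodPot_eq_zero_iff [DecidableEq A] (e : ι → A → ℝ)
    {f g : A → ℝ} (hf : ∀ ℓ, 0 < 1 + e ℓ ⬝ᵥ f) (hg : ∀ ℓ, 0 < 1 + e ℓ ⬝ᵥ g) :
    bregman (compositeLikelihoodPot e) f g = 0 ↔ ∀ ℓ, e ℓ ⬝ᵥ f = e ℓ ⬝ᵥ g := by
  rw [bregman_compositeLikelihoodPot e hf hg, Finset.sum_eq_zero_iff_of_nonneg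
    fun ℓ _ => sub_one_sub_log_nonneg (div_pos (hf ℓ) (hg ℓ))]
  simp only [Finset.mem_univ, true_imp_iff, sub_one_sub_log_eq_zero_iff (div_pos (hf _) (hg _)),
    div_eq_one_iff_eq (hg _).ne', add_right_inj]

end CompositeLikelihood

theorem eq_of_forall_dotProduct_eq {R A ι : Type*} [CommSemiring R] [Fintype A] [DecidableEq A]
    {e : ι → A → R} (hspan : Submodule.span R (Set.range e) = ⊤) {f g : A → R}
    (h : ∀ ℓ, e ℓ ⬝ᵥ f = e ℓ ⬝ᵥ g) : f = g := by
  have hfun : (dotProductBilin R R).flip f = (dotProductBilin R R).flip g :=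
    LinearMap.ext_on_range hspan h
  funext a
  simpa using LinearMap.congr_fun hfun (Pi.single a 1)

theorem bregman_eq_zero_of_DPhi_eq_zero {Y : Type*} [Fintype Y] [DecidableEq Y]
    {G : SimpleGraph Y} [DecidableRel G.Adj] {Y0 : Finset Y}
    {φ : ∀ y : Y, (↥(G.neighborSet y) → ℝ) → ℝ} {p q : Y → ℝ} (hp : ∀ y, 0 < p y)
    (hφ : ∀ y ∈ Y0, 0 ≤ bregman (φ y) (fun z => p z.1 / p y) (fun z => q z.1 / q y))
    (h : DPhi G Y0 φ p q = 0) :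
    ∀ y ∈ Y0, bregman (φ y) (fun z => p z.1 / p y) (fun z => q z.1 / q y) = 0 := by
  intro y hy
  have hterm := (Finset.sum_eq_zero_iff_of_nonneg
    fun y hy => mul_nonneg (hp y).le (hφ y hy)).1 h y hy
  exact (mul_eq_zero.1 hterm).resolve_left (hp y).ne'

theorem SimpleGraph.Reachable.apply_eq_of_forall_adj {V β : Type*} {G : SimpleGraph V}
    {f : V → β} (hf : ∀ u v, G.Adj u v → f u = f v) {u v : V} (h : G.Reachable u v) :
    f u = f v := by
  obtain ⟨w⟩ := h
  induction w with
  | nil => rfl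
  | cons hadj _ ih => exact (hf _ _ hadj).trans ih

theorem eq_of_sum_eq_of_forall_div_eq {Y : Type*} [Fintype Y] {p q : Y → ℝ}
    (hq : ∀ y, q y ≠ 0) (hsum : ∑ y, p y = ∑ y, q y) (hsum0 : ∑ y, q y ≠ 0)
    (hratio : ∀ y z, p y / q y = p z / q z) : p = q := by
  obtain ⟨y₀, -⟩ := Finset.exists_ne_zero_of_sum_ne_zero hsum0
  have hp : p = fun y => p y₀ / q y₀ * q y := by
    funext y
    rw [← hratio y y₀, div_mul_cancel₀ _ (hq y)]
  have hr : p y₀ / q y₀ = 1 := by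
    rw [hp, ← Finset.mul_sum] at hsum
    exact (mul_eq_right₀ hsum0).1 hsum
  rw [hp, hr]
  simp

theorem stmt18_general {Y : Type*} [Fintype Y] [DecidableEq Y]
    (G : SimpleGraph Y) [DecidableRel G.Adj] (hGconn : G.Connected)
    (m : ℕ) (c : Y → Fin m → Finset Y)
    (hspan : ∀ y : Y, Submodule.span ℝ
        (Set.range fun ℓ : Fin m =>
          fun z : ↥(G.neighborSet y) => if z.1 ∈ c y ℓ then (1 : ℝ) else 0) = ⊤)
    (p q : Y → ℝ) (hp : p ∈ probSet Y) (hq : q ∈ probSet Y)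
    (h : DPhi G Finset.univ
        (fun y g => -∑ ℓ : Fin m,
          Real.log (1 + ∑ z : ↥(G.neighborSet y), if z.1 ∈ c y ℓ then g z else 0))
        p q = 0) : p = q := by
  obtain ⟨hp0, hp1⟩ := hp
  obtain ⟨hq0, hq1⟩ := hq
  set e : ∀ y, Fin m → ↥(G.neighborSet y) → ℝ := fun y ℓ z => if z.1 ∈ c y ℓ then 1 else 0
  have hpot : (fun y g => -∑ ℓ : Fin m,
      Real.log (1 + ∑ z : ↥(G.neighborSet y), if z.1 ∈ c y ℓ then g z else 0)) =
      fun y => compositeLikelihoodPot (e y) := by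
    funext y g
    simp only [compositeLikelihoodPot, dotProduct, e, ite_mul, one_mul, zero_mul]
  have hpos : ∀ r : Y → ℝ, (∀ y, 0 < r y) → ∀ y ℓ, 0 < 1 + e y ℓ ⬝ᵥ fun z => r z.1 / r y :=
    fun r hr y ℓ => add_pos_of_pos_of_nonneg one_pos <| dotProduct_nonneg_of_nonneg
      (fun z => by positivity) fun z => (div_pos (hr z.1) (hr y)).le
  rw [hpot] at h
  have hlocal : ∀ y, ∀ z : ↥(G.neighborSet y), p z / p y = q z / q y := by
    intro y
    refine congrFun (eq_of_forall_dotProduct_eq (hspan y) ?_)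
    refine (bregman_compositeLikelihoodPot_eq_zero_iff _ (hpos p hp0 y) (hpos q hq0 y)).1 ?_
    refine bregman_eq_zero_of_DPhi_eq_zero hp0 (fun y _ => ?_) h y (Finset.mem_univ y)
    exact bregman_compositeLikelihoodPot_nonneg _ (hpos p hp0 y) (hpos q hq0 y)
  have hadj : ∀ u v, G.Adj u v → p u / q u = p v / q v := fun u v huv =>
    ((div_eq_div_iff_div_eq_div' (hp0 u).ne' (hq0 v).ne').1 (hlocal u ⟨v, huv⟩)).symm
  exact eq_of_sum_eq_of_forall_div_eq (fun y => (hq0 y).ne') (hp1.trans hq1.symm)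
    (by simp [hq1]) fun u v => (hGconn.preconnected u v).apply_eq_of_forall_adj hadj

/-- Extended composite likelihood: for a connected graph `G`, `𝒴₀ = 𝒴`,
subsets `b₁(y), …, b_m(y) ⊆ b(y)` covering `b(y)`, and local potentials
`φ_y(g) = −Σ_ℓ log(1 + Σ_{z ∈ b_ℓ(y)} g_z)`, if for every `y` the indicator vectors of the
`b_ℓ(y)` span `ℝ^{b(y)}`, then the composite local Bregman divergence satisfies the
coincidence axiom on `𝒫`. -/
theorem stmt18 {Y : Type*} [Fintype Y] [DecidableEq Y]
    (G : SimpleGraph Y) [DecidableRel G.Adj] (hGconn : G.Connected)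
    (m : ℕ) (c : Y → Fin m → Finset Y)
    (hsub : ∀ (y : Y) (ℓ : Fin m), c y ℓ ⊆ G.neighborFinset y)
    (hcover : ∀ y : Y, Finset.univ.biUnion (c y) = G.neighborFinset y)
    (hspan : ∀ y : Y, Submodule.span ℝ
        (Set.range fun ℓ : Fin m =>
          fun z : ↥(G.neighborSet y) => if z.1 ∈ c y ℓ then (1 : ℝ) else 0) = ⊤)
    (p q : Y → ℝ) (hp : p ∈ probSet Y) (hq : q ∈ probSet Y)
    (h : DPhi G Finset.univ
        (fun y g => -∑ ℓ : Fin m,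
          Real.log (1 + ∑ z : ↥(G.neighborSet y), if z.1 ∈ c y ℓ then g z else 0))
        p q = 0) : p = q :=
  stmt18_general G hGconn m c hspan p q hp hq h
end
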